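/- Let d ≥ 1 and let m* be a real number with m* > d/2. There exists a constant C > 0, depending only on d and m*, with the following property: for all real numbers γ, γ' with 0 ≤ γ' < γ ≤ 1, every M ≥ 0, every matrix A : ℤ^d × ℤ^d → ℂ satisfying |A(a,b)| ≤ M e^{−γ|a−b|} for all a, b ∈ ℤ^d, and every ζ : ℤ^d → ℂ with ‖ζ‖_{γ'}² := Σ_{b∈ℤ^d} |ζ(b)|² e^{2γ'|b|} ⟨b⟩^{2m*} < ∞, the sums (Aζ)(a) = Σ_{b∈ℤ^d} A(a,b) ζ(b) converge absolutely for every a, and ‖Aζ‖_{γ'} ≤ C (γ − γ')^{−(d+m*)} M ‖ζ‖_{γ'}. -/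

import Mathlib

/-- The lattice point `a ∈ ℤ^d` viewed as a vector in Euclidean space `ℝ^d`. -/
noncomputable def latt {d : ℕ} (a : Fin d → ℤ) : EuclideanSpace ℝ (Fin d) :=
  WithLp.toLp 2 (fun i => (a i : ℝ))

/-- The summand of the square of the weighted `ℓ²`-norm
`‖ζ‖_γ² = Σ_b |ζ(b)|² e^{2γ|b|} ⟨b⟩^{2m*}`, where `⟨b⟩ = max(|b|,1)`. -/
noncomputable def wSummand {d : ℕ} (mstar γ : ℝ) (ζ : (Fin d → ℤ) → ℂ)
    (b : Fin d → ℤ) : ℝ :=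
  ‖ζ b‖ ^ 2 * Real.exp (2 * γ * ‖latt b‖) * max ‖latt b‖ 1 ^ (2 * mstar)

/-!
Write `w(b) = e^{γ'|b|} ⟨b⟩^{m*}`. The triangle inequality gives
`w(a) ≤ 2^{m*} e^{γ'|a-b|} ⟨a-b⟩^{m*} w(b)`, so `|A(a,b)| w(a) ≤ k(a-b) w(b)` with
`k(c) = 2^{m*} M e^{-(γ-γ')|c|} ⟨c⟩^{m*}`. Young's inequality `ℓ¹ * ℓ² → ℓ²` (proved through
Cauchy–Schwarz, in `ℝ≥0∞` so that all rearrangements are free) then gives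
`‖Aζ‖_{γ'} ≤ ‖k‖_{ℓ¹} ‖ζ‖_{γ'}`. Finally, with `ε = γ - γ'`, the factor `⟨c⟩^{m*}` is absorbed by
half of the exponential at the cost of `ε^{-m*}`, and `e^{-ε|c|/2} ≤ ∏ᵢ e^{-ε|cᵢ|/(2d)}` splits the
lattice sum into `d` one-dimensional sums `∑ₙ e^{-ε|n|/(2d)} = O(d/ε)`.
-/

open scoped ENNReal

namespace ENNReal

lemma two_mul_le_add_sq (a b : ℝ≥0∞) : 2 * a * b ≤ a ^ 2 + b ^ 2 := by
  rcases eq_or_ne a ⊤ with rfl | ha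
  · rcases eq_or_ne b 0 with rfl | hb <;> simp [*, top_pow]
  rcases eq_or_ne b ⊤ with rfl | hb
  · simp [top_pow]
  lift a to NNReal using ha
  lift b to NNReal using hb
  exact_mod_cast _root_.two_mul_le_add_sq a b

/-- `ℝ≥0∞` is not a strictly ordered semiring, so Mathlib's finite Cauchy–Schwarz does not
apply; instead expand the square and use `2xy ≤ x² + y²`. -/
lemma sq_tsum_mul_le {ι : Type*} (k x : ι → ℝ≥0∞) :
    (∑' i, k i * x i) ^ 2 ≤ (∑' i, k i) * ∑' i, k i * x i ^ 2 := by
  have hS : ∑' i, ∑' j, k i * k j * x i ^ 2 = (∑' i, k i * x i ^ 2) * ∑' i, k i := by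
    simp_rw [mul_right_comm (k _) (k _), ENNReal.tsum_mul_left, ENNReal.tsum_mul_right]
  have hT : ∑' i, ∑' j, k i * k j * x j ^ 2 = (∑' i, k i) * ∑' i, k i * x i ^ 2 := by
    simp_rw [mul_assoc, ENNReal.tsum_mul_left, ENNReal.tsum_mul_right]
  refine (ENNReal.mul_le_mul_iff_right two_ne_zero ofNat_ne_top).1 ?_
  calc 2 * (∑' i, k i * x i) ^ 2 = ∑' i, ∑' j, k i * k j * (2 * x i * x j) := by
        rw [sq, ← ENNReal.tsum_mul_right, ← ENNReal.tsum_mul_left]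
        simp_rw [← ENNReal.tsum_mul_left]
        exact tsum_congr fun i => tsum_congr fun j => by ring
    _ ≤ ∑' i, ∑' j, k i * k j * (x i ^ 2 + x j ^ 2) := by
        gcongr with i j; exact two_mul_le_add_sq _ _
    _ = 2 * ((∑' i, k i) * ∑' i, k i * x i ^ 2) := by
        simp_rw [mul_add, ENNReal.tsum_add, hS, hT]; ring

lemma tsum_sq_conv_le {G : Type*} [AddGroup G] (k x : G → ℝ≥0∞) :
    ∑' a, (∑' b, k (a - b) * x b) ^ 2 ≤ (∑' c, k c) ^ 2 * ∑' b, x b ^ 2 := by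
  have hrow (a : G) : ∑' b, k (a - b) = ∑' c, k c := (Equiv.subLeft a).tsum_eq k
  have hcol (b : G) : ∑' a, k (a - b) = ∑' c, k c := (Equiv.subRight b).tsum_eq k
  calc ∑' a, (∑' b, k (a - b) * x b) ^ 2
      ≤ ∑' a, (∑' c, k c) * ∑' b, k (a - b) * x b ^ 2 := by
        gcongr with a
        exact (sq_tsum_mul_le _ _).trans_eq (by rw [hrow])
    _ = (∑' c, k c) * ∑' b, x b ^ 2 * ∑' a, k (a - b) := by
        rw [ENNReal.tsum_mul_left, ENNReal.tsum_comm]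
        simp_rw [← ENNReal.tsum_mul_left, mul_comm (x _ ^ 2)]
    _ = (∑' c, k c) ^ 2 * ∑' b, x b ^ 2 := by
        simp_rw [hcol, ENNReal.tsum_mul_right]; ring

lemma tsum_fin_pi_prod {α : Type*} (g : α → ℝ≥0∞) (n : ℕ) :
    ∑' c : Fin n → α, ∏ i, g (c i) = (∑' a, g a) ^ n := by
  induction n with
  | zero => simp
  | succ n ih =>
    rw [← (Fin.consEquiv fun _ => α).tsum_eq, ENNReal.tsum_prod', pow_succ', ← ih,
      ← ENNReal.tsum_mul_right]
    simp [Fin.consEquiv, Fin.prod_univ_succ, ENNReal.tsum_mul_left]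

end ENNReal

lemma summable_and_tsum_le_of_tsum_ofReal_le {ι : Type*} {f : ι → ℝ} {B : ℝ}
    (hf : ∀ i, 0 ≤ f i) (hB : 0 ≤ B) (h : ∑' i, ENNReal.ofReal (f i) ≤ ENNReal.ofReal B) :
    Summable f ∧ ∑' i, f i ≤ B := by
  have hsum : Summable f :=
    (ENNReal.summable_toReal (ne_top_of_le_ne_top ENNReal.ofReal_ne_top h)).congr
      fun i => ENNReal.toReal_ofReal (hf i)
  refine ⟨hsum, ?_⟩
  rwa [← ENNReal.ofReal_le_ofReal_iff hB, ENNReal.ofReal_tsum_of_nonneg hf hsum]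

lemma ofReal_sq_norm_mul {E : Type*} [SeminormedAddGroup E] (z : E) {w : ℝ} (hw : 0 ≤ w) :
    ENNReal.ofReal ((‖z‖ * w) ^ 2) = (‖z‖ₑ * ENNReal.ofReal w) ^ 2 := by
  rw [ENNReal.ofReal_pow (by positivity), ENNReal.ofReal_mul (norm_nonneg _), ofReal_norm]

theorem weighted_young_ell2 {G R : Type*} [AddGroup G] [NormedRing R] {A : G → G → R}
    {w k : G → ℝ} (hw : ∀ a, 0 < w a) (hk : ∀ c, 0 ≤ k c) (hk_sum : Summable k)
    (hA : ∀ a b, ‖A a b‖ * w a ≤ k (a - b) * w b) {ζ : G → R}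
    (hζ : Summable fun b => (‖ζ b‖ * w b) ^ 2) :
    (∀ a, Summable fun b => ‖A a b * ζ b‖) ∧
      Summable (fun a => (‖∑' b, A a b * ζ b‖ * w a) ^ 2) ∧
      ∑' a, (‖∑' b, A a b * ζ b‖ * w a) ^ 2 ≤ (∑' c, k c) ^ 2 * ∑' b, (‖ζ b‖ * w b) ^ 2 := by
  set W : G → ℝ≥0∞ := fun a => ENNReal.ofReal (w a)
  set y : G → ℝ≥0∞ := fun a => ∑' b, ‖A a b * ζ b‖ₑ
  have hrow (a : G) : y a * W a ≤ ∑' b, ENNReal.ofReal (k (a - b)) * (‖ζ b‖ₑ * W b) := by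
    rw [← ENNReal.tsum_mul_right]
    refine ENNReal.tsum_le_tsum fun b => ?_
    calc ‖A a b * ζ b‖ₑ * W a = ENNReal.ofReal (‖A a b * ζ b‖ * w a) := by
          rw [← ofReal_norm, ENNReal.ofReal_mul (norm_nonneg _)]
      _ ≤ ENNReal.ofReal (k (a - b) * w b * ‖ζ b‖) := by
          refine ENNReal.ofReal_le_ofReal ?_
          calc ‖A a b * ζ b‖ * w a ≤ ‖A a b‖ * ‖ζ b‖ * w a :=
                mul_le_mul_of_nonneg_right (norm_mul_le _ _) (hw a).le
            _ = ‖A a b‖ * w a * ‖ζ b‖ := by ring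
            _ ≤ k (a - b) * w b * ‖ζ b‖ :=
                mul_le_mul_of_nonneg_right (hA a b) (norm_nonneg _)
      _ = ENNReal.ofReal (k (a - b)) * (‖ζ b‖ₑ * W b) := by
          rw [← ofReal_norm, ← ENNReal.ofReal_mul (norm_nonneg _),
            ← ENNReal.ofReal_mul (hk _)]; ring_nf
  have hsq : ∑' a, (y a * W a) ^ 2 ≤
      ENNReal.ofReal ((∑' c, k c) ^ 2 * ∑' b, (‖ζ b‖ * w b) ^ 2) := by
    refine (ENNReal.tsum_le_tsum fun a => pow_le_pow_left' (hrow a) 2).trans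
      ((ENNReal.tsum_sq_conv_le (fun c => ENNReal.ofReal (k c)) (fun b => ‖ζ b‖ₑ * W b)).trans_eq
        ?_)
    rw [ENNReal.ofReal_mul (by positivity), ENNReal.ofReal_pow (tsum_nonneg hk),
      ENNReal.ofReal_tsum_of_nonneg hk hk_sum,
      ENNReal.ofReal_tsum_of_nonneg (fun b => by positivity) hζ]
    simp_rw [ofReal_sq_norm_mul _ (hw _).le, W]
  have hsummable (a : G) : Summable fun b => ‖A a b * ζ b‖ := by
    have hfin : (y a * W a) ^ 2 ≠ ⊤ :=
      (ENNReal.lt_top_of_tsum_ne_top (ne_top_of_le_ne_top ENNReal.ofReal_ne_top hsq) a).ne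
    have hW : W a ≠ 0 := (ENNReal.ofReal_pos.2 (hw a)).ne'
    refine tsum_enorm_ne_top_iff_summable_norm.1 fun hy => hfin ?_
    change y a = ⊤ at hy
    rw [hy, ENNReal.top_mul hW, ENNReal.top_pow two_ne_zero]
  refine ⟨hsummable, summable_and_tsum_le_of_tsum_ofReal_le (fun a => by positivity)
    (by positivity) ((ENNReal.tsum_le_tsum fun a => ?_).trans hsq)⟩
  rw [ofReal_sq_norm_mul _ (hw a).le]
  gcongr
  exact enorm_tsum_le_tsum_enorm

lemma rpow_le_rpow_mul_exp {m x : ℝ} (hm : 0 < m) (hx : 0 ≤ x) : x ^ m ≤ m ^ m * Real.exp x := by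
  rcases hx.eq_or_lt with rfl | hx
  · rw [Real.zero_rpow hm.ne']; positivity
  have hlog : m * Real.log (x / m) ≤ x - m := by
    have := Real.log_le_sub_one_of_pos (div_pos hx hm)
    calc m * Real.log (x / m) ≤ m * (x / m - 1) := by gcongr
      _ = x - m := by field_simp
  calc x ^ m = m ^ m * (x / m) ^ m := by
        rw [← Real.mul_rpow hm.le (by positivity), mul_div_cancel₀ _ hm.ne']
    _ = m ^ m * Real.exp (m * Real.log (x / m)) := by
        rw [Real.rpow_def_of_pos (div_pos hx hm), mul_comm m]
    _ ≤ m ^ m * Real.exp x := by gcongr; linarith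

lemma max_one_rpow_le_mul_exp {m ε t : ℝ} (hm : 0 < m) (hε : 0 < ε) (hε1 : ε ≤ 1)
    (ht : 0 ≤ t) :
    max t 1 ^ m ≤ (1 + (2 * m) ^ m) * ε ^ (-m) * Real.exp (ε * t / 2) := by
  have hmax : max t 1 ^ m ≤ 1 + t ^ m := by
    rcases le_total t 1 with h | h
    · rw [max_eq_right h, Real.one_rpow]; linarith [Real.rpow_nonneg ht m]
    · rw [max_eq_left h]; linarith
  have hone : 1 ≤ ε ^ (-m) * Real.exp (ε * t / 2) := by
    refine one_le_mul_of_one_le_of_one_le ?_ (Real.one_le_exp (by positivity))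
    rw [Real.rpow_neg hε.le, ← Real.inv_rpow hε.le]
    exact Real.one_le_rpow (one_le_inv_iff₀.2 ⟨hε, hε1⟩) hm.le
  have hpow : t ^ m ≤ (2 * m) ^ m * ε ^ (-m) * Real.exp (ε * t / 2) := by
    have key := rpow_le_rpow_mul_exp hm (x := ε * t / 2) (by positivity)
    have hsplit : t ^ m = (2 / ε) ^ m * (ε * t / 2) ^ m := by
      rw [← Real.mul_rpow (by positivity) (by positivity)]; congr 1; field_simp
    rw [hsplit, Real.mul_rpow two_pos.le hm.le, Real.div_rpow two_pos.le hε.le,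
      Real.rpow_neg hε.le]
    calc 2 ^ m / ε ^ m * (ε * t / 2) ^ m ≤ 2 ^ m / ε ^ m * (m ^ m * Real.exp (ε * t / 2)) := by
          gcongr
      _ = 2 ^ m * m ^ m * (ε ^ m)⁻¹ * Real.exp (ε * t / 2) := by ring
  nlinarith

section expWeight

variable {E : Type*} [SeminormedAddCommGroup E]

noncomputable def expWeight (γ m : ℝ) (x : E) : ℝ := Real.exp (γ * ‖x‖) * max ‖x‖ 1 ^ m

lemma expWeight_pos (γ m : ℝ) (x : E) : 0 < expWeight γ m x := by
  have : 0 < max ‖x‖ 1 := lt_max_of_lt_right one_pos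
  unfold expWeight; positivity

lemma exp_mul_expWeight (δ γ m : ℝ) (x : E) :
    Real.exp (δ * ‖x‖) * expWeight γ m x = expWeight (γ + δ) m x := by
  rw [expWeight, expWeight, ← mul_assoc, ← Real.exp_add]; ring_nf

lemma max_norm_add_one_le (x y : E) : max ‖x + y‖ 1 ≤ 2 * max ‖x‖ 1 * max ‖y‖ 1 := by
  have hx : 1 ≤ max ‖x‖ 1 := le_max_right _ _
  have hy : 1 ≤ max ‖y‖ 1 := le_max_right _ _
  have hxy : ‖x + y‖ ≤ max ‖x‖ 1 + max ‖y‖ 1 :=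
    (norm_add_le x y).trans (add_le_add (le_max_left _ _) (le_max_left _ _))
  exact max_le (by nlinarith) (by nlinarith)

lemma expWeight_add_le {γ m : ℝ} (hγ : 0 ≤ γ) (hm : 0 ≤ m) (x y : E) :
    expWeight γ m (x + y) ≤ 2 ^ m * expWeight γ m x * expWeight γ m y := by
  have hexp : Real.exp (γ * ‖x + y‖) ≤ Real.exp (γ * ‖x‖) * Real.exp (γ * ‖y‖) := by
    rw [← Real.exp_add, ← mul_add]; gcongr; exact norm_add_le x y
  have hpow : max ‖x + y‖ 1 ^ m ≤ 2 ^ m * max ‖x‖ 1 ^ m * max ‖y‖ 1 ^ m := by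
    rw [← Real.mul_rpow (by positivity) (by positivity),
      ← Real.mul_rpow (by positivity) (by positivity)]
    exact Real.rpow_le_rpow (by positivity) (max_norm_add_one_le x y) hm
  calc expWeight γ m (x + y)
      ≤ (Real.exp (γ * ‖x‖) * Real.exp (γ * ‖y‖)) *
          (2 ^ m * max ‖x‖ 1 ^ m * max ‖y‖ 1 ^ m) := by
        unfold expWeight; gcongr
    _ = 2 ^ m * expWeight γ m x * expWeight γ m y := by unfold expWeight; ring

lemma mul_expWeight_le_of_le_exp {α M γ γ' m : ℝ} (hM : 0 ≤ M) (hγ' : 0 ≤ γ') (hm : 0 ≤ m)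
    {x y : E} (hα : α ≤ M * Real.exp (-γ * ‖x - y‖)) :
    α * expWeight γ' m x ≤ 2 ^ m * M * expWeight (γ' - γ) m (x - y) * expWeight γ' m y := by
  calc α * expWeight γ' m x
      ≤ M * Real.exp (-γ * ‖x - y‖) * (2 ^ m * expWeight γ' m (x - y) * expWeight γ' m y) := by
        gcongr
        · exact (expWeight_pos _ _ _).le
        · simpa using expWeight_add_le hγ' hm (x - y) y
    _ = 2 ^ m * M * expWeight (γ' - γ) m (x - y) * expWeight γ' m y := by
        rw [sub_eq_add_neg γ', ← exp_mul_expWeight]; ring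

lemma expWeight_neg_le {m ε : ℝ} (hm : 0 < m) (hε : 0 < ε) (hε1 : ε ≤ 1) (x : E) :
    expWeight (-ε) m x ≤ (1 + (2 * m) ^ m) * ε ^ (-m) * Real.exp (-(ε / 2) * ‖x‖) := by
  calc expWeight (-ε) m x
      ≤ Real.exp (-ε * ‖x‖) * ((1 + (2 * m) ^ m) * ε ^ (-m) * Real.exp (ε * ‖x‖ / 2)) := by
        unfold expWeight; gcongr; exact max_one_rpow_le_mul_exp hm hε hε1 (norm_nonneg x)
    _ = (1 + (2 * m) ^ m) * ε ^ (-m) * Real.exp (-(ε / 2) * ‖x‖) := by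
        rw [mul_left_comm, ← Real.exp_add]; ring_nf

end expWeight

lemma latt_sub {d : ℕ} (a b : Fin d → ℤ) : latt (a - b) = latt a - latt b := by
  ext i; simp [latt]

lemma abs_le_norm_latt {d : ℕ} (c : Fin d → ℤ) (i : Fin d) : |(c i : ℝ)| ≤ ‖latt c‖ := by
  simpa [latt] using PiLp.norm_apply_le (latt c) i

lemma exp_neg_mul_norm_latt_le_prod {d : ℕ} {b : ℝ} (hb : 0 ≤ b) (c : Fin d → ℤ) :
    Real.exp (-(d * b) * ‖latt c‖) ≤ ∏ i, Real.exp (-(b * |(c i : ℝ)|)) := by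
  rw [← Real.exp_sum, Finset.sum_neg_distrib, neg_mul]
  gcongr
  calc ∑ i, b * |(c i : ℝ)| ≤ ∑ _i : Fin d, b * ‖latt c‖ := by
        gcongr with i; exact abs_le_norm_latt c i
    _ = d * b * ‖latt c‖ := by simp [mul_assoc]

lemma wSummand_eq_sq {d : ℕ} (m γ : ℝ) (ζ : (Fin d → ℤ) → ℂ) :
    wSummand m γ ζ = fun b => (‖ζ b‖ * expWeight γ m (latt b)) ^ 2 := by
  ext b
  have h2m : max ‖latt b‖ 1 ^ (2 * m) = (max ‖latt b‖ 1 ^ m) ^ 2 := by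
    rw [mul_comm, Real.rpow_mul (by positivity), Real.rpow_two]
  rw [wSummand, expWeight, h2m, mul_assoc 2, two_mul, Real.exp_add]
  ring

lemma tsum_int_exp_neg_mul_abs_le {a : ℝ} (ha : 0 < a) :
    ∑' n : ℤ, ENNReal.ofReal (Real.exp (-(a * |(n : ℝ)|))) ≤
      ENNReal.ofReal (2 * Real.exp a / a) := by
  have hnat : ∑' n : ℕ, ENNReal.ofReal (Real.exp (-(a * n))) ≤ ENNReal.ofReal (Real.exp a / a) := by
    refine ENNReal.tsum_le_of_sum_range_le fun M => ?_
    rw [← ENNReal.ofReal_sum_of_nonneg fun n _ => (Real.exp_pos _).le]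
    refine ENNReal.ofReal_le_ofReal ?_
    simpa using sum_Ico_pow_mul_exp_neg_le (k := 0) (M := M) ha
  rw [tsum_of_nat_of_neg_add_one ENNReal.summable ENNReal.summable]
  calc _ ≤ ∑' n : ℕ, ENNReal.ofReal (Real.exp (-(a * n))) +
        ∑' n : ℕ, ENNReal.ofReal (Real.exp (-(a * n))) := by
        gcongr with n n
        · simp
        · rw [Int.cast_neg, abs_neg]; push_cast; rw [abs_of_pos (by positivity)]; linarith
    _ ≤ ENNReal.ofReal (2 * Real.exp a / a) := by
        rw [mul_div_assoc, two_mul, ENNReal.ofReal_add (by positivity) (by positivity)]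
        gcongr

lemma summable_expWeight_latt_and_tsum_le {d : ℕ} (hd : 1 ≤ d) {m ε : ℝ} (hm : 0 < m)
    (hε : 0 < ε) (hε1 : ε ≤ 1) :
    Summable (fun c : Fin d → ℤ => expWeight (-ε) m (latt c)) ∧
      ∑' c : Fin d → ℤ, expWeight (-ε) m (latt c) ≤
        (1 + (2 * m) ^ m) * (4 * Real.exp 1 * d) ^ d * ε ^ (-((d : ℝ) + m)) := by
  have hd0 : (0 : ℝ) < d := by exact_mod_cast hd
  set K := (1 + (2 * m) ^ m) * ε ^ (-m) with hK
  set a := ε / (2 * d) with ha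
  have ha0 : 0 < a := by positivity
  have hpoint (c : Fin d → ℤ) : ENNReal.ofReal (expWeight (-ε) m (latt c)) ≤
      ENNReal.ofReal K * ∏ i, ENNReal.ofReal (Real.exp (-(a * |(c i : ℝ)|))) := by
    rw [← ENNReal.ofReal_prod_of_nonneg fun i _ => (Real.exp_pos _).le,
      ← ENNReal.ofReal_mul (by positivity)]
    refine ENNReal.ofReal_le_ofReal ((expWeight_neg_le hm hε hε1 _).trans ?_)
    have hda : ε / 2 = d * a := by rw [ha]; field_simp
    rw [hda]
    gcongr
    exact exp_neg_mul_norm_latt_le_prod ha0.le c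
  have hint : 2 * Real.exp a / a ≤ 4 * Real.exp 1 * d / ε := by
    have ha1 : a ≤ 1 := by
      rw [ha, div_le_one (by positivity)]; nlinarith [(by exact_mod_cast hd : (1 : ℝ) ≤ d)]
    calc 2 * Real.exp a / a = 4 * Real.exp a * d / ε := by rw [ha]; field_simp; ring
      _ ≤ 4 * Real.exp 1 * d / ε := by gcongr
  refine summable_and_tsum_le_of_tsum_ofReal_le (fun c => (expWeight_pos _ _ _).le)
    (by positivity) ?_
  calc ∑' c : Fin d → ℤ, ENNReal.ofReal (expWeight (-ε) m (latt c))
      ≤ ∑' c : Fin d → ℤ, ENNReal.ofReal K * ∏ i, ENNReal.ofReal (Real.exp (-(a * |(c i : ℝ)|))) :=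
        ENNReal.tsum_le_tsum hpoint
    _ = ENNReal.ofReal K * (∑' n : ℤ, ENNReal.ofReal (Real.exp (-(a * |(n : ℝ)|)))) ^ d := by
        rw [ENNReal.tsum_mul_left, ENNReal.tsum_fin_pi_prod
          (fun n : ℤ => ENNReal.ofReal (Real.exp (-(a * |(n : ℝ)|))))]
    _ ≤ ENNReal.ofReal K * ENNReal.ofReal (4 * Real.exp 1 * d / ε) ^ d := by
        gcongr; exact (tsum_int_exp_neg_mul_abs_le ha0).trans (ENNReal.ofReal_le_ofReal hint)
    _ = ENNReal.ofReal ((1 + (2 * m) ^ m) * (4 * Real.exp 1 * d) ^ d * ε ^ (-((d : ℝ) + m))) := by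
        rw [← ENNReal.ofReal_pow (by positivity), ← ENNReal.ofReal_mul (by positivity), hK,
          neg_add, Real.rpow_add hε, Real.rpow_neg hε.le (d : ℝ), Real.rpow_natCast, div_pow]
        ring_nf

/-- Young-inequality bound (2.2): if `|A(a,b)| ≤ M e^{−γ|a−b|}` and
`‖ζ‖_{γ'} < ∞` for some `0 ≤ γ' < γ ≤ 1`, then `Aζ` is absolutely convergent and
`‖Aζ‖_{γ'} ≤ C (γ−γ')^{−(d+m*)} M ‖ζ‖_{γ'}` with `C` depending only on `d, m*`. -/
theorem stmt_15 (d : ℕ) (hd : 1 ≤ d) (mstar : ℝ) (hm : (d : ℝ) / 2 < mstar) :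
    ∃ C : ℝ, 0 < C ∧ ∀ γ γ' : ℝ, 0 ≤ γ' → γ' < γ → γ ≤ 1 →
      ∀ M : ℝ, 0 ≤ M →
      ∀ A : (Fin d → ℤ) → (Fin d → ℤ) → ℂ,
        (∀ a b, ‖A a b‖ ≤ M * Real.exp (-γ * ‖latt (a - b)‖)) →
      ∀ ζ : (Fin d → ℤ) → ℂ, Summable (wSummand mstar γ' ζ) →
        (∀ a, Summable fun b => ‖A a b * ζ b‖) ∧
        Summable (wSummand mstar γ' (fun a => ∑' b, A a b * ζ b)) ∧
        Real.sqrt (∑' a, wSummand mstar γ' (fun a' => ∑' b, A a' b * ζ b) a) ≤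
          C * (γ - γ') ^ (-((d : ℝ) + mstar)) * M *
            Real.sqrt (∑' b, wSummand mstar γ' ζ b) := by
  have hm0 : 0 < mstar := lt_of_le_of_lt (by positivity) hm
  refine ⟨2 ^ mstar * ((1 + (2 * mstar) ^ mstar) * (4 * Real.exp 1 * d) ^ d), by positivity, ?_⟩
  intro γ γ' hγ' hγ'γ hγ1 M hM A hA ζ hζ
  obtain ⟨hsum, hle⟩ :=
    summable_expWeight_latt_and_tsum_le hd hm0 (ε := γ - γ') (by linarith) (by linarith)
  rw [neg_sub] at hsum hle
  set w : (Fin d → ℤ) → ℝ := fun b => expWeight γ' mstar (latt b)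
  set k : (Fin d → ℤ) → ℝ := fun c => 2 ^ mstar * M * expWeight (γ' - γ) mstar (latt c)
  have hkernel (a b : Fin d → ℤ) : ‖A a b‖ * w a ≤ k (a - b) * w b :=
    (mul_expWeight_le_of_le_exp hM hγ' hm0.le (by rw [← latt_sub]; exact hA a b)).trans_eq
      (by simp only [k, w, latt_sub])
  have hk0 (c : Fin d → ℤ) : 0 ≤ k c := mul_nonneg (by positivity) (expWeight_pos _ _ _).le
  simp_rw [wSummand_eq_sq] at hζ ⊢
  obtain ⟨hrow, hsq, hbound⟩ := weighted_young_ell2 (w := w) (k := k)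
    (fun b => expWeight_pos _ _ _) hk0 (hsum.mul_left _) hkernel hζ
  refine ⟨hrow, hsq, ?_⟩
  calc _ ≤ Real.sqrt ((∑' c, k c) ^ 2 * ∑' b, (‖ζ b‖ * w b) ^ 2) := Real.sqrt_le_sqrt hbound
    _ = (∑' c, k c) * Real.sqrt (∑' b, (‖ζ b‖ * w b) ^ 2) := by
        rw [Real.sqrt_mul' _ (tsum_nonneg fun b => by positivity),
          Real.sqrt_sq (tsum_nonneg hk0)]
    _ ≤ 2 ^ mstar * M * ((1 + (2 * mstar) ^ mstar) * (4 * Real.exp 1 * d) ^ d *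
          (γ - γ') ^ (-((d : ℝ) + mstar))) * Real.sqrt (∑' b, (‖ζ b‖ * w b) ^ 2) := by
        rw [tsum_mul_left]; gcongr
    _ = _ := by ring
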